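/- Let X be a normed space, Ω ⊂ ℝⁿ with finite measure, q > 1, and f : Ω × ℝ → ℝ satisfy |f(x,t)| ≤ a(1+|t|^{q−1}). Let (uₙ) be bounded in X with uₙ ⇀ u weakly in X, uₙ → u in L^q(Ω) and in L¹(Ω). If the duality pairings satisfy ⟨uₙ, uₙ − u⟩ = ⟨J'(uₙ), uₙ − u⟩ + ∫_Ω f(x,uₙ)(uₙ − u)dx with ‖J'(uₙ)‖_* → 0 and X is a Hilbert space, then uₙ → u strongly in X. -/

import Mathlib

open MeasureTheory Filter
open scoped RealInnerProductSpace Topology ENNReal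

/-!
Expanding `‖uₖ - v‖² = ⟪uₖ, uₖ - v⟫ - ⟪v, uₖ - v⟫`, the last term vanishes by weak convergence,
and the identity splits the first into the derivative term, at most `‖Dₖ‖` times a bounded
quantity, and the nonlinear integral. By the growth bound and Hölder's inequality with exponents
`q / (q - 1)` and `q`, the latter is at most `a (‖uₖ - v‖₁ + ‖uₖ‖_q ^ (q - 1) ‖uₖ - v‖_q)`, and
`‖uₖ‖_q` stays bounded since `uₖ → v` in `L^q`.
-/

section GrowthNonlinearity

variable {Ω : Type*} [MeasurableSpace Ω] {μ : Measure Ω} {q : ℝ}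

theorem eLpNorm_abs_rpow_mul_le (hq : 1 < q) {g h : Ω → ℝ}
    (hg : AEStronglyMeasurable g μ) (hh : AEStronglyMeasurable h μ) :
    eLpNorm (fun x => |g x| ^ (q - 1) * h x) 1 μ ≤
      eLpNorm g (ENNReal.ofReal q) μ ^ (q - 1) * eLpNorm h (ENNReal.ofReal q) μ := by
  have hconj := Real.HolderConjugate.conjExponent hq
  have := hconj.symm.ennrealOfReal
  have hpow : AEStronglyMeasurable (fun x => |g x| ^ (q - 1)) μ :=
    (hg.aemeasurable.abs.pow_const _).aestronglyMeasurable
  have hexp : ENNReal.ofReal q.conjExponent * ENNReal.ofReal (q - 1) = ENNReal.ofReal q := by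
    rw [← ENNReal.ofReal_mul hconj.symm.nonneg, mul_comm, hconj.sub_one_mul_conj]
  calc eLpNorm (fun x => |g x| ^ (q - 1) * h x) 1 μ
      ≤ eLpNorm (fun x => ‖g x‖ ^ (q - 1)) (ENNReal.ofReal q.conjExponent) μ *
          eLpNorm h (ENNReal.ofReal q) μ := by
        simpa using eLpNorm_le_eLpNorm_mul_eLpNorm'_of_norm hpow hh (· * ·) 1
          (.of_forall fun x => by simp [norm_mul])
    _ = eLpNorm g (ENNReal.ofReal q) μ ^ (q - 1) * eLpNorm h (ENNReal.ofReal q) μ := by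
        rw [eLpNorm_norm_rpow g (by linarith), hexp]

theorem eLpNorm_growth_mul_le (hq : 1 < q) {F : Ω → ℝ → ℝ} {a : ℝ}
    (hF : ∀ x t, |F x t| ≤ a * (1 + |t| ^ (q - 1))) {g h : Ω → ℝ}
    (hg : AEStronglyMeasurable g μ) (hh : AEStronglyMeasurable h μ) :
    eLpNorm (fun x => F x (g x) * h x) 1 μ ≤
      ‖a‖ₑ * (eLpNorm h 1 μ +
        eLpNorm g (ENNReal.ofReal q) μ ^ (q - 1) * eLpNorm h (ENNReal.ofReal q) μ) := by
  have hpow : AEStronglyMeasurable (fun x => |g x| ^ (q - 1) * |h x|) μ :=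
    ((hg.aemeasurable.abs.pow_const _).mul hh.aemeasurable.abs).aestronglyMeasurable
  have hpoint : ∀ x, ‖F x (g x) * h x‖ ≤ a * (|h x| + |g x| ^ (q - 1) * |h x|) := fun x => by
    rw [Real.norm_eq_abs, abs_mul, ← one_add_mul, ← mul_assoc]
    exact mul_le_mul_of_nonneg_right (hF x (g x)) (abs_nonneg _)
  calc eLpNorm (fun x => F x (g x) * h x) 1 μ
      ≤ eLpNorm (fun x => a * (|h x| + |g x| ^ (q - 1) * |h x|)) 1 μ := eLpNorm_mono_real hpoint
    _ = ‖a‖ₑ * eLpNorm (fun x => |h x| + |g x| ^ (q - 1) * |h x|) 1 μ :=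
        eLpNorm_const_smul a _ 1 μ
    _ ≤ ‖a‖ₑ * (eLpNorm (fun x => |h x|) 1 μ + eLpNorm (fun x => |g x| ^ (q - 1) * |h x|) 1 μ) :=
        mul_le_mul_right (eLpNorm_add_le hh.norm hpow le_rfl) _
    _ ≤ ‖a‖ₑ * (eLpNorm h 1 μ +
          eLpNorm g (ENNReal.ofReal q) μ ^ (q - 1) * eLpNorm h (ENNReal.ofReal q) μ) := by
        gcongr
        · exact (eLpNorm_norm h).le
        · simpa only [← Real.norm_eq_abs, eLpNorm_norm] using
            eLpNorm_abs_rpow_mul_le hq hg hh.norm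

theorem tendsto_integral_growth_mul_sub (hq : 1 < q) {F : Ω → ℝ → ℝ} {a : ℝ}
    (hF : ∀ x t, |F x t| ≤ a * (1 + |t| ^ (q - 1))) {ι : Type*} {l : Filter ι}
    {g : ι → Ω → ℝ} {g₀ : Ω → ℝ} (hg : ∀ k, MemLp (g k) (ENNReal.ofReal q) μ)
    (hg₀ : MemLp g₀ (ENNReal.ofReal q) μ)
    (hLq : Tendsto (fun k => eLpNorm (g k - g₀) (ENNReal.ofReal q) μ) l (𝓝 0))
    (hL1 : Tendsto (fun k => eLpNorm (g k - g₀) 1 μ) l (𝓝 0)) :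
    Tendsto (fun k => ∫ x, F x (g k x) * (g k x - g₀ x) ∂μ) l (𝓝 0) := by
  set C := eLpNorm g₀ (ENNReal.ofReal q) μ + 1
  have hq1 : (1 : ℝ≥0∞) ≤ ENNReal.ofReal q := by simpa using hq.le
  have hbound : ∀ᶠ k in l, eLpNorm (g k) (ENNReal.ofReal q) μ ≤ C := by
    filter_upwards [hLq.eventually (eventually_le_nhds zero_lt_one)] with k hk
    calc eLpNorm (g k) (ENNReal.ofReal q) μ
        = eLpNorm (g₀ + (g k - g₀)) (ENNReal.ofReal q) μ := by rw [add_sub_cancel]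
      _ ≤ C := (eLpNorm_add_le hg₀.1 ((hg k).1.sub hg₀.1) hq1).trans (add_le_add_right hk _)
  have hC : C ^ (q - 1) ≠ ∞ :=
    ENNReal.rpow_ne_top_of_nonneg (by linarith) (by finiteness [hg₀.eLpNorm_lt_top])
  have hmajorant : Tendsto (fun k => ‖a‖ₑ * (eLpNorm (g k - g₀) 1 μ +
      C ^ (q - 1) * eLpNorm (g k - g₀) (ENNReal.ofReal q) μ)) l (𝓝 0) := by
    simpa using ENNReal.Tendsto.const_mul (hL1.add (ENNReal.Tendsto.const_mul hLq (.inr hC)))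
      (.inr enorm_ne_top)
  rw [tendsto_zero_iff_enorm_tendsto_zero]
  refine tendsto_of_tendsto_of_tendsto_of_le_of_le' tendsto_const_nhds hmajorant
    (.of_forall fun _ => zero_le) ?_
  filter_upwards [hbound] with k hk
  calc ‖∫ x, F x (g k x) * (g k x - g₀ x) ∂μ‖ₑ
      ≤ eLpNorm (fun x => F x (g k x) * (g k - g₀) x) 1 μ :=
        (enorm_integral_le_lintegral_enorm _).trans_eq eLpNorm_one_eq_lintegral_enorm.symm
    _ ≤ _ := eLpNorm_growth_mul_le hq hF (hg k).1 ((hg k).1.sub hg₀.1)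
    _ ≤ _ := by gcongr

end GrowthNonlinearity

theorem tendsto_of_tendsto_inner_sub_zero {X : Type*} [NormedAddCommGroup X]
    [InnerProductSpace ℝ X] {ι : Type*} {l : Filter ι} {u : ι → X} {v : X}
    (hweak : Tendsto (fun k => ⟪u k, v⟫) l (𝓝 ⟪v, v⟫))
    (h : Tendsto (fun k => ⟪u k, u k - v⟫) l (𝓝 0)) : Tendsto u l (𝓝 v) := by
  have hsq : Tendsto (fun k => ‖u k - v‖ ^ 2) l (𝓝 0) := by
    have := h.sub (hweak.sub_const ⟪v, v⟫)
    rw [sub_self, sub_zero] at this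
    refine this.congr fun k => ?_
    rw [← real_inner_self_eq_norm_sq, inner_sub_left (u k) v, inner_sub_right v (u k) v,
      real_inner_comm (u k) v]
  rw [tendsto_iff_norm_sub_tendsto_zero]
  simpa [Real.sqrt_sq (norm_nonneg _)] using hsq.sqrt

theorem strong_convergence_from_PS_general
    {Ω X : Type*} [MeasurableSpace Ω] (μ : Measure Ω)
    [NormedAddCommGroup X] [InnerProductSpace ℝ X]
    (T : X → Ω → ℝ) (f : Ω → ℝ → ℝ) (a q : ℝ) (hq : 1 < q)
    (hf : ∀ x, ∀ t : ℝ, |f x t| ≤ a * (1 + |t| ^ (q - 1)))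
    (u : ℕ → X) (v : X) (M : ℝ)
    (hbdd : ∀ k, ‖u k‖ ≤ M)
    (hweak : ∀ w : X, Tendsto (fun k => ⟪u k, w⟫) atTop (𝓝 ⟪v, w⟫))
    (hmem : ∀ k, MemLp (T (u k)) (ENNReal.ofReal q) μ)
    (hmemv : MemLp (T v) (ENNReal.ofReal q) μ)
    (hLq : Tendsto (fun k => eLpNorm (T (u k) - T v) (ENNReal.ofReal q) μ)
      atTop (𝓝 0))
    (hL1 : Tendsto (fun k => eLpNorm (T (u k) - T v) 1 μ) atTop (𝓝 0))
    (D : ℕ → X →L[ℝ] ℝ)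
    (hD : Tendsto (fun k => ‖D k‖) atTop (𝓝 0))
    (hident : ∀ k, ⟪u k, u k - v⟫ =
      D k (u k - v) + ∫ x, f x (T (u k) x) * (T (u k) x - T v x) ∂μ) :
    Tendsto u atTop (𝓝 v) := by
  have hnonlinear := tendsto_integral_growth_mul_sub hq hf hmem hmemv hLq hL1
  have hbounded : IsBoundedUnder (· ≤ ·) atTop fun k => ‖u k - v‖ :=
    isBoundedUnder_of ⟨M + ‖v‖, fun k => (norm_sub_le _ _).trans (add_le_add_left (hbdd k) _)⟩
  have hderivative : Tendsto (fun k => D k (u k - v)) atTop (𝓝 0) :=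
    (tendsto_zero_iff_norm_tendsto_zero.2 hD).op_zero_isBoundedUnder_le hbounded
      (fun L w => L w) fun L w => L.le_opNorm w
  refine tendsto_of_tendsto_inner_sub_zero (hweak v) ?_
  simpa [hident] using hderivative.add hnonlinear

/-- Palais–Smale/Cerami argument: if `(uₙ)` is bounded in a Hilbert space `X` (embedded
via `T` into functions on `Ω` of finite measure), converges weakly to `v`, converges to
`T v` in `L^q` and `L¹`, `f` has growth `|f(x,t)| ≤ a(1+|t|^{q−1})`, the identity
`⟪uₙ, uₙ − v⟫ = ⟨J'(uₙ), uₙ − v⟩ + ∫ f(x,uₙ)(uₙ − v)` holds with `‖J'(uₙ)‖_* → 0`,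
then `uₙ → v` strongly in `X`. -/
theorem strong_convergence_from_PS
    {Ω X : Type*} [MeasurableSpace Ω] (μ : Measure Ω) [IsFiniteMeasure μ]
    [NormedAddCommGroup X] [InnerProductSpace ℝ X]
    (T : X → Ω → ℝ) (f : Ω → ℝ → ℝ) (a q : ℝ) (ha : 0 < a) (hq : 1 < q)
    (hf : ∀ x, ∀ t : ℝ, |f x t| ≤ a * (1 + |t| ^ (q - 1)))
    (u : ℕ → X) (v : X) (M : ℝ)
    (hbdd : ∀ k, ‖u k‖ ≤ M)
    (hweak : ∀ w : X, Tendsto (fun k => ⟪u k, w⟫) atTop (𝓝 ⟪v, w⟫))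
    (hmem : ∀ k, MemLp (T (u k)) (ENNReal.ofReal q) μ)
    (hmemv : MemLp (T v) (ENNReal.ofReal q) μ)
    (hfmeas : ∀ k, AEStronglyMeasurable (fun x => f x (T (u k) x)) μ)
    (hLq : Tendsto (fun k => eLpNorm (T (u k) - T v) (ENNReal.ofReal q) μ)
      atTop (𝓝 0))
    (hL1 : Tendsto (fun k => eLpNorm (T (u k) - T v) 1 μ) atTop (𝓝 0))
    (D : ℕ → X →L[ℝ] ℝ)
    (hD : Tendsto (fun k => ‖D k‖) atTop (𝓝 0))
    (hident : ∀ k, ⟪u k, u k - v⟫ =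
      D k (u k - v) + ∫ x, f x (T (u k) x) * (T (u k) x - T v x) ∂μ) :
    Tendsto u atTop (𝓝 v) :=
  strong_convergence_from_PS_general μ T f a q hq hf u v M hbdd hweak hmem hmemv hLq hL1 D hD hident
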